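/- (Generalized minimal work principle, Eq. (11c).) In the setting of Theorem 1 — β > 0, H : ℝ → Matrix n n ℂ a continuously differentiable family of Hermitian matrices, ρ : ℝ → Matrix n n ℂ a continuously differentiable family of positive definite density matrices, with ΔW = ∫₀^τ Re tr(ρ_t · H'_t) dt, ΔQ = ∫₀^τ Re tr(ρ'_t · H_t) dt, Δ_iS = S(ρ_τ) − S(ρ_0) − β·ΔQ, ΔI = S(ρ_τ‖ρ^β_τ) − S(ρ_0‖ρ^β_0), ΔF^β = F^β_τ − F^β_0 — if the entropy production is nonnegative, Δ_iS ≥ 0, then ΔW ≥ ΔF^β + (1/β)·ΔI. -/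

import Mathlib

open scoped ComplexOrder

attribute [local instance] Matrix.normedAddCommGroup Matrix.normedSpace

/-- The matrix exponential of an `n × n` complex matrix. -/
noncomputable def matExp {n : ℕ} (A : Matrix (Fin n) (Fin n) ℂ) : Matrix (Fin n) (Fin n) ℂ :=
  NormedSpace.exp A

/-- The matrix logarithm, given by the continuous functional calculus (the real
logarithm applied to the eigenvalues of a Hermitian matrix). -/
noncomputable def matLog {n : ℕ} (A : Matrix (Fin n) (Fin n) ℂ) : Matrix (Fin n) (Fin n) ℂ :=
  cfc Real.log A

/-- The von Neumann entropy `S(ρ) = −Re tr(ρ log ρ)`. -/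
noncomputable def vnEntropy {n : ℕ} (ρ : Matrix (Fin n) (Fin n) ℂ) : ℝ :=
  -(Matrix.trace (ρ * matLog ρ)).re

/-- The relative entropy `S(ρ‖σ) = Re tr(ρ log ρ) − Re tr(ρ log σ)`. -/
noncomputable def relEntropy {n : ℕ} (ρ σ : Matrix (Fin n) (Fin n) ℂ) : ℝ :=
  (Matrix.trace (ρ * matLog ρ)).re - (Matrix.trace (ρ * matLog σ)).re

/-- The partition function `Z = Re tr(exp(−βH))`. -/
noncomputable def partZ {n : ℕ} (β : ℝ) (H : Matrix (Fin n) (Fin n) ℂ) : ℝ :=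
  (Matrix.trace (matExp ((-β) • H))).re

/-- The Gibbs state `ρ^β = exp(−βH)/Z`. -/
noncomputable def gibbs {n : ℕ} (β : ℝ) (H : Matrix (Fin n) (Fin n) ℂ) :
    Matrix (Fin n) (Fin n) ℂ :=
  (partZ β H)⁻¹ • matExp ((-β) • H)

/-!
Because `tr ρ = 1` and `log ρ^β = −log Z − βH`, the relative entropy to the Gibbs state is
`S(ρ‖ρ^β) = −S(ρ) + log Z + β tr(ρH)`, while the product rule gives `ΔW + ΔQ = Δ tr(ρH)`.
Together these yield the exact balance `ΔW − ΔF^β − ΔI/β = Δ_iS/β`, so the inequality is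
the nonnegativity of the entropy production.
-/

namespace ContinuousLinearMap

variable {E F G : Type*} [NormedAddCommGroup E] [NormedSpace ℝ E] [NormedAddCommGroup F]
  [NormedSpace ℝ F] [NormedAddCommGroup G] [NormedSpace ℝ G] [CompleteSpace G]

theorem integral_bilinear_deriv_add_eq_sub (B : E →L[ℝ] F →L[ℝ] G) {u : ℝ → E} {v : ℝ → F}
    (hu : ContDiff ℝ 1 u) (hv : ContDiff ℝ 1 v) (a b : ℝ) :
    (∫ t in a..b, B (u t) (deriv v t)) + (∫ t in a..b, B (deriv u t) (v t)) =
      B (u b) (v b) - B (u a) (v a) := by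
  have hu' := hu.continuous_deriv le_rfl
  have hv' := hv.continuous_deriv le_rfl
  have hcont₁ : Continuous fun t => B (u t) (deriv v t) := by fun_prop
  have hcont₂ : Continuous fun t => B (deriv u t) (v t) := by fun_prop
  have hcont : Continuous fun t => B (u t) (deriv v t) + B (deriv u t) (v t) :=
    hcont₁.add hcont₂
  rw [← intervalIntegral.integral_add (hcont₁.intervalIntegrable _ _)
    (hcont₂.intervalIntegrable _ _)]
  refine intervalIntegral.integral_eq_sub_of_hasDerivAt (f := fun t => B (u t) (v t))
    (fun t _ => ?_) (hcont.intervalIntegrable _ _)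
  exact B.hasDerivAt_of_bilinear (fun _ => (hu.differentiable one_ne_zero t).hasDerivAt)
    (fun _ => (hv.differentiable one_ne_zero t).hasDerivAt)

end ContinuousLinearMap

namespace Matrix

noncomputable def reTraceMul (ι : Type*) [Fintype ι] :
    Matrix ι ι ℂ →L[ℝ] Matrix ι ι ℂ →L[ℝ] ℝ :=
  ((LinearMap.mul ℝ (Matrix ι ι ℂ)).compr₂
    (Complex.reLm ∘ₗ Matrix.traceLinearMap ι ℝ ℂ)).toContinuousBilinearMap

variable {ι : Type*} [Fintype ι]

theorem integral_re_trace_mul_deriv_add_eq_sub {A B : ℝ → Matrix ι ι ℂ}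
    (hA : ContDiff ℝ 1 A) (hB : ContDiff ℝ 1 B) (a b : ℝ) :
    (∫ t in a..b, (A t * deriv B t).trace.re) + (∫ t in a..b, (deriv A t * B t).trace.re) =
      (A b * B b).trace.re - (A a * B a).trace.re :=
  (reTraceMul ι).integral_bilinear_deriv_add_eq_sub hA hB a b

theorem IsHermitian.trace_cfc {𝕜 : Type*} [RCLike 𝕜] [DecidableEq ι] {A : Matrix ι ι 𝕜}
    (hA : A.IsHermitian) (f : ℝ → ℝ) : (cfc f A).trace = ∑ i, (f (hA.eigenvalues i) : 𝕜) := by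
  rw [hA.cfc_eq, IsHermitian.cfc, Unitary.conjStarAlgAut_apply, trace_mul_cycle,
    hA.eigenvectorUnitary.2.1, one_mul, trace_diagonal]
  rfl

end Matrix

section Gibbs

variable {n : ℕ}

theorem matExp_eq_cfc_exp {A : Matrix (Fin n) (Fin n) ℂ} (hA : A.IsHermitian) :
    matExp A = cfc Real.exp A := by
  -- The CFC lemma needs a Banach algebra; the operator norm provides one without changing
  -- `NormedSpace.exp`, but then the CFC instance must be supplied by hand.
  let : NormedRing (Matrix (Fin n) (Fin n) ℂ) := Matrix.linftyOpNormedRing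
  let : NormedAlgebra ℂ (Matrix (Fin n) (Fin n) ℂ) := Matrix.linftyOpNormedAlgebra
  rw [matExp, Real.exp_eq_exp_ℝ]
  exact (@CFC.exp_eq_normedSpace_exp ℝ _ _ IsSelfAdjoint _ _ _
    Matrix.IsHermitian.instContinuousFunctionalCalculus A hA).symm

theorem partZ_pos (hn : 0 < n) (β : ℝ) {H : Matrix (Fin n) (Fin n) ℂ} (hH : H.IsHermitian) :
    0 < partZ β H := by
  have : Nonempty (Fin n) := ⟨⟨0, hn⟩⟩
  have hA : ((-β) • H).IsHermitian := hH.smul (IsSelfAdjoint.all (-β))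
  rw [partZ, matExp_eq_cfc_exp hA, hA.trace_cfc, Complex.re_sum]
  exact Finset.sum_pos (fun i _ => Real.exp_pos _) Finset.univ_nonempty

theorem matLog_smul_matExp {c : ℝ} (hc : 0 < c) {A : Matrix (Fin n) (Fin n) ℂ}
    (hA : A.IsHermitian) :
    matLog (c • matExp A) = algebraMap ℝ (Matrix (Fin n) (Fin n) ℂ) (Real.log c) + A := by
  have hlog : ∀ x, Real.log (c * Real.exp x) = Real.log c + x := fun x => by
    rw [Real.log_mul hc.ne' (Real.exp_pos x).ne', Real.log_exp]
  have hpos : ContinuousOn Real.log ((fun x => c * Real.exp x) '' spectrum ℝ A) :=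
    Real.continuousOn_log.mono fun _ ⟨x, _, hx⟩ => hx ▸ (mul_pos hc (Real.exp_pos x)).ne'
  rw [matLog, matExp_eq_cfc_exp hA, ← cfc_const_mul c Real.exp A,
    ← cfc_comp' Real.log (fun x => c * Real.exp x) A hpos]
  simp only [hlog]
  rw [cfc_const_add (Real.log c) (fun x => x) A, cfc_id' ℝ A]

theorem matLog_gibbs (hn : 0 < n) (β : ℝ) {H : Matrix (Fin n) (Fin n) ℂ} (hH : H.IsHermitian) :
    matLog (gibbs β H) =
      algebraMap ℝ (Matrix (Fin n) (Fin n) ℂ) (-Real.log (partZ β H)) + (-β) • H := by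
  rw [gibbs, matLog_smul_matExp (inv_pos.mpr (partZ_pos hn β hH))
    (hH.smul (IsSelfAdjoint.all (-β))), Real.log_inv]

theorem relEntropy_gibbs (hn : 0 < n) (β : ℝ) {ρ H : Matrix (Fin n) (Fin n) ℂ}
    (hH : H.IsHermitian) (hρ : ρ.trace = 1) :
    relEntropy ρ (gibbs β H) = -vnEntropy ρ + Real.log (partZ β H) + β * (ρ * H).trace.re := by
  rw [relEntropy, vnEntropy, matLog_gibbs hn β hH, mul_add, Algebra.algebraMap_eq_smul_one,
    mul_smul_comm, mul_one, mul_smul_comm, Matrix.trace_add, Matrix.trace_smul,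
    Matrix.trace_smul, hρ]
  simp only [Complex.add_re, Complex.real_smul, Complex.mul_re, Complex.ofReal_re,
    Complex.ofReal_im, Complex.one_re, Complex.one_im]
  ring

end Gibbs

theorem generalized_minimal_work_principle_general {n : ℕ} (hn : 0 < n)
    (β : ℝ) (hβ : 0 < β) (H ρ : ℝ → Matrix (Fin n) (Fin n) ℂ)
    (hH : ContDiff ℝ 1 H) (hHherm : ∀ t, (H t).IsHermitian)
    (hρ : ContDiff ℝ 1 ρ)
    (hρtr : ∀ t, Matrix.trace (ρ t) = 1)
    (τ : ℝ)
    (ΔW ΔQ ΔiS ΔI ΔFβ : ℝ)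
    (hW : ΔW = ∫ t in (0:ℝ)..τ, (Matrix.trace (ρ t * deriv H t)).re)
    (hQ : ΔQ = ∫ t in (0:ℝ)..τ, (Matrix.trace (deriv ρ t * H t)).re)
    (hiS : ΔiS = (vnEntropy (ρ τ) - vnEntropy (ρ 0)) - β * ΔQ)
    (hI : ΔI = relEntropy (ρ τ) (gibbs β (H τ)) - relEntropy (ρ 0) (gibbs β (H 0)))
    (hF : ΔFβ = (-(1 / β) * Real.log (partZ β (H τ))) - (-(1 / β) * Real.log (partZ β (H 0))))
    (hpos : 0 ≤ ΔiS) :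
    ΔW ≥ ΔFβ + (1 / β) * ΔI := by
  have hEnergy : ΔW + ΔQ = (ρ τ * H τ).trace.re - (ρ 0 * H 0).trace.re := by
    rw [hW, hQ]
    exact Matrix.integral_re_trace_mul_deriv_add_eq_sub hρ hH 0 τ
  rw [relEntropy_gibbs hn β (hHherm τ) (hρtr τ), relEntropy_gibbs hn β (hHherm 0) (hρtr 0)] at hI
  have hBalance : ΔW - ΔFβ - (1 / β) * ΔI = ΔiS / β := by
    rw [hF, hI, hiS]
    field_simp
    linear_combination β * hEnergy
  have : 0 ≤ ΔiS / β := div_nonneg hpos hβ.le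
  linarith

/-- **Generalized minimal work principle (Eq. (11c)).**
In the setting of Theorem 1, if the entropy production is nonnegative
(`ΔiS ≥ 0`), then `ΔW ≥ ΔF^β + (1/β)·ΔI`. -/
theorem generalized_minimal_work_principle {n : ℕ} (hn : 0 < n)
    (β : ℝ) (hβ : 0 < β) (H ρ : ℝ → Matrix (Fin n) (Fin n) ℂ)
    (hH : ContDiff ℝ 1 H) (hHherm : ∀ t, (H t).IsHermitian)
    (hρ : ContDiff ℝ 1 ρ)
    (hρpos : ∀ t, (ρ t).PosDef) (hρtr : ∀ t, Matrix.trace (ρ t) = 1)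
    (τ : ℝ) (hτ : 0 ≤ τ)
    (ΔW ΔQ ΔiS ΔI ΔFβ : ℝ)
    (hW : ΔW = ∫ t in (0:ℝ)..τ, (Matrix.trace (ρ t * deriv H t)).re)
    (hQ : ΔQ = ∫ t in (0:ℝ)..τ, (Matrix.trace (deriv ρ t * H t)).re)
    (hiS : ΔiS = (vnEntropy (ρ τ) - vnEntropy (ρ 0)) - β * ΔQ)
    (hI : ΔI = relEntropy (ρ τ) (gibbs β (H τ)) - relEntropy (ρ 0) (gibbs β (H 0)))
    (hF : ΔFβ = (-(1 / β) * Real.log (partZ β (H τ))) - (-(1 / β) * Real.log (partZ β (H 0))))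
    (hpos : 0 ≤ ΔiS) :
    ΔW ≥ ΔFβ + (1 / β) * ΔI :=
  generalized_minimal_work_principle_general hn β hβ H ρ hH hHherm hρ hρtr τ ΔW ΔQ ΔiS ΔI ΔFβ hW hQ
    hiS hI hF hpos
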